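/- For every real number P ≥ 0: log₂(1 + P) + 2·log₂(1 + 2P) − log₂(P² + 3P + 1) − log₂(1 + P/2) ≤ 3. Equivalently, log₂((2P + 2)/(P + 2)) + log₂((4P² + 4P + 1)/(P² + 3P + 1)) ≤ 3. -/
import Mathlib

lemma logb_le_three {x : ℝ} (hx0 : 0 < x) (hx : x ≤ 8) : Real.logb 2 x ≤ 3 := by
  have h8 : Real.logb 2 (8 : ℝ) = 3 := by
    rw [show (8 : ℝ) = 2 ^ (3 : ℕ) by norm_num, Real.logb_pow,
      Real.logb_self_eq_one (by norm_num)]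
    norm_num
  calc Real.logb 2 x ≤ Real.logb 2 8 :=
        Real.logb_le_logb_of_le (by norm_num) hx0 hx
    _ = 3 := h8

theorem stmt_16 (P : ℝ) (hP : 0 ≤ P) :
    (Real.logb 2 (1 + P) + 2 * Real.logb 2 (1 + 2 * P)
        - Real.logb 2 (P ^ 2 + 3 * P + 1) - Real.logb 2 (1 + P / 2) ≤ 3) ∧
    (Real.logb 2 ((2 * P + 2) / (P + 2))
        + Real.logb 2 ((4 * P ^ 2 + 4 * P + 1) / (P ^ 2 + 3 * P + 1)) ≤ 3) := by
  have h1 : (0:ℝ) < 1 + P := by linarith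
  have h2 : (0:ℝ) < 1 + 2 * P := by linarith
  have h3 : (0:ℝ) < P ^ 2 + 3 * P + 1 := by nlinarith
  have h4 : (0:ℝ) < 1 + P / 2 := by linarith
  constructor
  · have e : Real.logb 2 (1 + P) + 2 * Real.logb 2 (1 + 2 * P)
        - Real.logb 2 (P ^ 2 + 3 * P + 1) - Real.logb 2 (1 + P / 2)
        = Real.logb 2 ((1 + P) * (1 + 2 * P) ^ 2
            / ((P ^ 2 + 3 * P + 1) * (1 + P / 2))) := by
      rw [Real.logb_div (by positivity) (by positivity),
          Real.logb_mul (by positivity) (by positivity),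
          Real.logb_mul (by positivity) (by positivity),
          Real.logb_pow]
      ring
    rw [e]
    apply logb_le_three (by positivity)
    rw [div_le_iff₀ (by positivity)]
    nlinarith
  · have e : Real.logb 2 ((2 * P + 2) / (P + 2))
        + Real.logb 2 ((4 * P ^ 2 + 4 * P + 1) / (P ^ 2 + 3 * P + 1))
        = Real.logb 2 ((2 * P + 2) / (P + 2)
            * ((4 * P ^ 2 + 4 * P + 1) / (P ^ 2 + 3 * P + 1))) := by
      rw [Real.logb_mul (by positivity) (by positivity)]
    rw [e]
    apply logb_le_three (by positivity)
    rw [div_mul_div_comm, div_le_iff₀ (by positivity)]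
    nlinarith
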